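/- arXiv:2002.08226 — 5 statements merged into one kernel-verified Lean document; each statement's English description precedes it below -/
import Mathlib

section
/- A d-degenerate graph on n vertices has at most 2^d · n nonempty cliques. -/
/-- A `d`-degenerate graph on `n` vertices has at most `2 ^ d * n` nonempty cliques.
Degeneracy is stated as: every nonempty set of vertices contains a vertex with at
most `d` neighbors inside the set. -/
theorem stmt0 {V : Type*} [Fintype V] [DecidableEq V] (G : SimpleGraph V)
    [DecidableRel G.Adj] (d : ℕ)
    (hdeg : ∀ A : Finset V, A.Nonempty → ∃ v ∈ A, (A.filter (fun u => G.Adj v u)).card ≤ d) :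
    (Finset.univ.powerset.filter
      (fun s : Finset V => s.Nonempty ∧ G.IsClique (s : Set V))).card ≤
      2 ^ d * Fintype.card V := by
  suffices h : ∀ A : Finset V,
      (A.powerset.filter (fun s : Finset V => s.Nonempty ∧ G.IsClique (s : Set V))).card ≤
        2 ^ d * A.card by
    simpa using h Finset.univ
  intro A
  induction A using Finset.strongInduction with
  | _ A ih =>
    rcases A.eq_empty_or_nonempty with rfl | hA
    · simp [Finset.filter_eq_empty_iff]
    obtain ⟨v, hv, hvd⟩ := hdeg A hA
    set P := A.powerset.filter (fun s : Finset V => s.Nonempty ∧ G.IsClique (s : Set V))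
      with hP
    have hsplit : (P.filter (fun s => v ∈ s)).card + (P.filter (fun s => v ∉ s)).card
        = P.card := Finset.card_filter_add_card_filter_not _
    -- cliques containing v
    have h1 : (P.filter (fun s => v ∈ s)).card ≤ 2 ^ d := by
      have hmaps : ∀ s ∈ P.filter (fun s => v ∈ s),
          s.erase v ∈ (A.filter (fun u => G.Adj v u)).powerset := by
        intro s hs
        simp only [hP, Finset.mem_filter, Finset.mem_powerset] at hs ⊢
        intro u hu
        have hus := Finset.mem_of_mem_erase hu
        have hne := Finset.ne_of_mem_erase hu
        exact Finset.mem_filter.2 ⟨hs.1.1 hus, hs.1.2.2 hs.2 hus (Ne.symm hne)⟩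
      have hinj : ∀ s ∈ P.filter (fun s => v ∈ s), ∀ t ∈ P.filter (fun s => v ∈ s),
          s.erase v = t.erase v → s = t := by
        intro s hs t ht hst
        have hvs : v ∈ s := (Finset.mem_filter.1 hs).2
        have hvt : v ∈ t := (Finset.mem_filter.1 ht).2
        rw [← Finset.insert_erase hvs, ← Finset.insert_erase hvt, hst]
      calc (P.filter (fun s => v ∈ s)).card
          ≤ (A.filter (fun u => G.Adj v u)).powerset.card :=
            Finset.card_le_card_of_injOn _ hmaps hinj
        _ = 2 ^ (A.filter (fun u => G.Adj v u)).card := Finset.card_powerset _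
        _ ≤ 2 ^ d := Nat.pow_le_pow_right (by norm_num) hvd
    -- cliques avoiding v
    have h2 : (P.filter (fun s => v ∉ s)).card ≤ 2 ^ d * (A.erase v).card := by
      refine le_trans (Finset.card_le_card ?_) (ih _ (Finset.erase_ssubset hv))
      intro s hs
      simp only [hP, Finset.mem_filter, Finset.mem_powerset] at hs ⊢
      refine ⟨fun u hu => Finset.mem_erase.2 ⟨?_, hs.1.1 hu⟩, hs.1.2⟩
      rintro rfl; exact hs.2 hu
    have hc : (A.erase v).card = A.card - 1 := Finset.card_erase_of_mem hv
    have hpos : 1 ≤ A.card := Finset.card_pos.2 hA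
    calc P.card = (P.filter (fun s => v ∈ s)).card + (P.filter (fun s => v ∉ s)).card :=
          hsplit.symm
      _ ≤ 2 ^ d + 2 ^ d * (A.card - 1) := by rw [hc] at h2; omega
      _ = 2 ^ d * (A.card - 1 + 1) := by ring
      _ = 2 ^ d * A.card := by rw [Nat.sub_add_cancel hpos]
end

section
/- Let d ≥ 1 and k ≥ 0 be integers, let G be a graph, and let U ⊆ V(G) with at most k non-edges inside U (i.e., G[U] becomes complete after adding at most k edges). Then for every induced subgraph F of G that is properly d-colorable, |U ∩ V(F)| ≤ (3d + √(d² + 8dk))/2. -/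
/-!
Inside `S` every colour class is independent in `G`, so the `n_i` vertices of `U ∩ S` of
colour `i` span `n_i.choose 2` non-edges of `G` inside `U`, and these are distinct for distinct
colours. Hence `∑ n_i.choose 2 ≤ k`, and with `m = |U ∩ S| = ∑ n_i`, Cauchy–Schwarz gives
`m² ≤ d ∑ n_i² = d (2 ∑ n_i.choose 2 + m) ≤ d (2k + m)`. Solving this quadratic inequality
gives `m ≤ (d + √(d² + 8dk))/2`.
-/

open Finset

theorem Nat.sq_eq_two_mul_choose_two_add (n : ℕ) : n ^ 2 = 2 * n.choose 2 + n := by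
  rw [Nat.choose_two_right, Nat.mul_div_cancel' (Nat.even_mul_pred_self n).two_dvd]
  cases n <;> simp [sq, Nat.mul_succ]

theorem Finset.sq_card_le_card_mul_two_mul_sum_choose_two_add {α ι : Type*} [Fintype ι]
    [DecidableEq ι] (t : Finset α) (c : α → ι) :
    #t ^ 2 ≤ Fintype.card ι * (2 * ∑ i, (#{a ∈ t | c a = i}).choose 2 + #t) := by
  have hfiber : ∑ i, #{a ∈ t | c a = i} = #t :=
    (card_eq_sum_card_fiberwise fun a _ => mem_univ (c a)).symm
  calc #t ^ 2 = (∑ i, #{a ∈ t | c a = i}) ^ 2 := by rw [hfiber]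
    _ ≤ Fintype.card ι * ∑ i, #{a ∈ t | c a = i} ^ 2 := sq_sum_le_card_mul_sum_sq
    _ = Fintype.card ι * (2 * ∑ i, (#{a ∈ t | c a = i}).choose 2 + #t) := by
      simp_rw [Nat.sq_eq_two_mul_choose_two_add, sum_add_distrib, ← mul_sum, hfiber]

theorem SimpleGraph.sum_choose_two_card_colorClass_le_ncard_compl_edges {V ι : Type*} [Finite V]
    [DecidableEq V] [Fintype ι] [DecidableEq ι] (G : SimpleGraph V) {U : Set V} {t : Finset V}
    (htU : ↑t ⊆ U) {c : V → ι} (hc : ∀ u ∈ t, ∀ v ∈ t, G.Adj u v → c u ≠ c v) :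
    ∑ i, (#{v ∈ t | c v = i}).choose 2 ≤ {e ∈ Gᶜ.edgeSet | ∀ v ∈ e, v ∈ U}.ncard := by
  set P : ι → Finset (Sym2 V) := fun i => {v ∈ t | c v = i}.offDiag.image Sym2.mk.uncurry
  have mem_P : ∀ i e, e ∈ P i ↔ ∃ a b, ((a ∈ t ∧ c a = i) ∧ (b ∈ t ∧ c b = i) ∧ a ≠ b) ∧
      s(a, b) = e := by
    simp [P]
  have hdisj : ((univ : Finset ι) : Set ι).PairwiseDisjoint P := by
    intro i _ j _ hij
    refine Finset.disjoint_left.mpr fun e hi hj => hij ?_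
    obtain ⟨a, b, ⟨⟨-, rfl⟩, -, -⟩, rfl⟩ := (mem_P i e).mp hi
    obtain ⟨a', b', ⟨⟨-, ha'⟩, ⟨-, hb'⟩, -⟩, he⟩ := (mem_P j _).mp hj
    rcases Sym2.eq_iff.mp he with ⟨rfl, -⟩ | ⟨-, rfl⟩
    exacts [ha', hb']
  have hsub : ↑(univ.biUnion P) ⊆ {e ∈ Gᶜ.edgeSet | ∀ v ∈ e, v ∈ U} := by
    intro e he
    obtain ⟨i, -, hi⟩ := mem_biUnion.mp he
    obtain ⟨a, b, ⟨⟨ha, rfl⟩, ⟨hb, hab⟩, hne⟩, rfl⟩ := (mem_P i _).mp hi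
    refine ⟨(compl_adj G a b).mpr ⟨hne, fun h => hc a ha b hb h hab.symm⟩, ?_⟩
    simp only [Sym2.mem_iff, forall_eq_or_imp, forall_eq]
    exact ⟨htU ha, htU hb⟩
  calc ∑ i, (#{v ∈ t | c v = i}).choose 2 = ∑ i, #(P i) := by simp [P, Sym2.card_image_offDiag]
    _ = #(univ.biUnion P) := (card_biUnion hdisj).symm
    _ = (↑(univ.biUnion P) : Set (Sym2 V)).ncard := (Set.ncard_coe_finset _).symm
    _ ≤ _ := Set.ncard_le_ncard hsub (Set.toFinite _)

theorem Real.le_add_sqrt_div_two_of_sq_le_mul_add {x a b : ℝ} (h : x ^ 2 ≤ a * x + b) :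
    x ≤ (a + √(a ^ 2 + 4 * b)) / 2 := by
  have := Real.abs_le_sqrt (show (2 * x - a) ^ 2 ≤ a ^ 2 + 4 * b by nlinarith)
  linarith [le_abs_self (2 * x - a)]

theorem stmt3_general {V : Type*} [Fintype V] (G : SimpleGraph V) (d k : ℕ)
    (U : Set V) (hk : {e ∈ Gᶜ.edgeSet | ∀ v ∈ e, v ∈ U}.ncard ≤ k)
    (S : Set V)
    (hcol : ∃ c : V → Fin d, ∀ u ∈ S, ∀ v ∈ S, G.Adj u v → c u ≠ c v) :
    ((U ∩ S).ncard : ℝ) ≤ (3 * d + Real.sqrt ((d : ℝ) ^ 2 + 8 * d * k)) / 2 := by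
  classical
  obtain ⟨c, hc⟩ := hcol
  set t := (U ∩ S).toFinset
  have hclasses : ∑ i, (#{v ∈ t | c v = i}).choose 2 ≤ k :=
    (G.sum_choose_two_card_colorClass_le_ncard_compl_edges (by simp [t]) fun u hu v hv => by
      simp only [t, Set.mem_toFinset] at hu hv
      exact hc u hu.2 v hv.2).trans hk
  have hnat : #t ^ 2 ≤ d * (2 * k + #t) := by
    refine (t.sq_card_le_card_mul_two_mul_sum_choose_two_add c).trans ?_
    rw [Fintype.card_fin]
    gcongr
  have hreal : (#t : ℝ) ^ 2 ≤ d * #t + 2 * d * k := by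
    have := (Nat.cast_le (α := ℝ)).mpr hnat
    push_cast at this
    linarith
  have hm := Real.le_add_sqrt_div_two_of_sq_le_mul_add hreal
  rw [show (d : ℝ) ^ 2 + 4 * (2 * d * k) = d ^ 2 + 8 * d * k by ring] at hm
  rw [Set.ncard_eq_toFinset_card']
  linarith [(Nat.cast_nonneg d : (0 : ℝ) ≤ d)]

/-- Let `d ≥ 1`, `k ≥ 0`, `G` a graph and `U` a vertex set spanning at most `k`
non-edges. Then for every set `S` inducing a properly `d`-colorable subgraph of
`G`, `|U ∩ S| ≤ (3d + √(d² + 8dk))/2`. -/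
theorem stmt3 {V : Type*} [Fintype V] (G : SimpleGraph V) (d k : ℕ) (hd : 1 ≤ d)
    (U : Set V) (hk : {e ∈ Gᶜ.edgeSet | ∀ v ∈ e, v ∈ U}.ncard ≤ k)
    (S : Set V)
    (hcol : ∃ c : V → Fin d, ∀ u ∈ S, ∀ v ∈ S, G.Adj u v → c u ≠ c v) :
    ((U ∩ S).ncard : ℝ) ≤ (3 * d + Real.sqrt ((d : ℝ) ^ 2 + 8 * d * k)) / 2 :=
  stmt3_general G d k U hk S hcol
end

section
/- Let G be a graph, A a set of at most k non-edges of G such that G' = G + A is chordal, and C a clique of G'. Then the number of partitions of C into sets that are independent in G is at most (2k)^{2k}. -/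
/-- An induced cycle of length `n` in `G`, given as an injective map `f : Fin n → V`
whose adjacencies are exactly the consecutive pairs along the cycle. -/
def IsInducedCycle {V : Type*} (G : SimpleGraph V) (n : ℕ) (f : Fin n → V) : Prop :=
  Function.Injective f ∧
    ∀ i j : Fin n, G.Adj (f i) (f j) ↔ ((i.val + 1) % n = j.val ∨ (j.val + 1) % n = i.val)

/-- A graph is chordal if it has no induced cycle of length at least `4`. -/
def IsChordal {V : Type*} (G : SimpleGraph V) : Prop :=
  ∀ n : ℕ, 4 ≤ n → ∀ f : Fin n → V, ¬ IsInducedCycle G n f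

/-!
Only the set `S` of vertices of `C` incident to an added edge matters, and `#S ≤ 2k`. Every other
vertex of `C` is `G`-adjacent to all the rest of `C`, so it is a singleton block of any partition
into `G`-independent sets. Such a partition is therefore determined by its restriction to `S`, and
a partition of `S` is determined by the map sending each element to a chosen element of its block,
so there are at most `#S ^ #S ≤ (2k)^(2k)` of them.
-/

open Finset

namespace Finpartition

variable {α : Type*} [DecidableEq α] {s t : Finset α}

theorem eq_of_part_eq {P Q : Finpartition s} (h : ∀ a ∈ s, P.part a = Q.part a) : P = Q := by
  have parts_subset : ∀ P Q : Finpartition s, (∀ a ∈ s, P.part a = Q.part a) →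
      P.parts ⊆ Q.parts := by
    intro P Q h p hp
    obtain ⟨a, ha, rfl⟩ := P.part_surjOn hp
    rw [h a ha]
    exact Q.part_mem.2 ha
  exact Finpartition.ext <|
    (parts_subset P Q h).antisymm (parts_subset Q P fun a ha ↦ (h a ha).symm)

theorem card_le_pow_card (s : Finset α) : Fintype.card (Finpartition s) ≤ #s ^ #s := by
  let rep (P : Finpartition s) (a : s) : s :=
    ⟨(P.part_nonempty.2 a.2).choose, P.part_subset _ (P.part_nonempty.2 a.2).choose_spec⟩
  have rep_mem (P : Finpartition s) (a : s) : (rep P a : α) ∈ P.part a :=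
    (P.part_nonempty.2 a.2).choose_spec
  have part_eq_iff (P : Finpartition s) (a b : s) : P.part b = P.part a ↔ rep P b = rep P a := by
    refine ⟨fun h ↦ ?_, fun h ↦ ?_⟩
    · ext
      simp only [rep, h]
    · have hr : P.part (rep P a) = P.part a := P.part_eq_of_mem (P.part_mem.2 a.2) (rep_mem P a)
      rw [← hr, ← h, P.part_eq_of_mem (P.part_mem.2 b.2) (rep_mem P b)]
  suffices Function.Injective rep by
    simpa using Fintype.card_le_of_injective rep this
  intro P Q hPQ
  refine eq_of_part_eq fun a ha ↦ ?_
  ext b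
  by_cases hb : b ∈ s
  · rw [P.mem_part_iff_part_eq_part hb ha, Q.mem_part_iff_part_eq_part hb ha,
      part_eq_iff P ⟨a, ha⟩ ⟨b, hb⟩, part_eq_iff Q ⟨a, ha⟩ ⟨b, hb⟩, hPQ]
  · exact iff_of_false (fun h ↦ hb (P.part_subset a h)) (fun h ↦ hb (Q.part_subset a h))

theorem part_restrict (P : Finpartition s) (ht : t ⊆ s) {a : α} (ha : a ∈ t) :
    (P.restrict ht).part a = P.part a ∩ t := by
  have ha' : a ∈ P.part a ∩ t := mem_inter.2 ⟨P.mem_part (ht ha), ha⟩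
  refine (P.restrict ht).part_eq_of_mem ?_ ha'
  exact mem_erase.2 ⟨ne_empty_of_mem ha', mem_image.2 ⟨_, P.part_mem.2 (ht ha), rfl⟩⟩

theorem injOn_restrict (ht : t ⊆ s) :
    Set.InjOn (fun P : Finpartition s ↦ P.restrict ht) {P | ∀ a ∈ s, a ∉ t → P.part a = {a}} := by
  have part_subset {P : Finpartition s} (hP : ∀ a ∈ s, a ∉ t → P.part a = {a}) {a : α}
      (ha : a ∈ t) : P.part a ⊆ t := by
    intro b hb
    by_contra hbt
    have hbs := P.part_subset a hb
    rw [P.mem_part_iff_part_eq_part hbs (ht ha), hP b hbs hbt] at hb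
    exact hbt (mem_singleton.1 (hb ▸ P.mem_part (ht ha)) ▸ ha)
  intro P hP Q hQ hPQ
  refine eq_of_part_eq fun a ha ↦ ?_
  by_cases hat : a ∈ t
  · rw [← inter_eq_left.2 (part_subset hP hat), ← inter_eq_left.2 (part_subset hQ hat),
      ← part_restrict P ht hat, ← part_restrict Q ht hat]
    exact congrArg (·.part a) hPQ
  · rw [hP a ha hat, hQ a ha hat]

theorem ncard_setOf_part_eq_singleton_le (ht : t ⊆ s) :
    {P : Finpartition s | ∀ a ∈ s, a ∉ t → P.part a = {a}}.ncard ≤ #t ^ #t :=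
  calc _ ≤ (Set.univ : Set (Finpartition t)).ncard :=
        Set.ncard_le_ncard_of_injOn _ (fun _ _ ↦ trivial) (injOn_restrict ht)
    _ = Fintype.card (Finpartition t) := by rw [Set.ncard_univ, Nat.card_eq_fintype_card]
    _ ≤ #t ^ #t := card_le_pow_card t

theorem part_eq_singleton_of_forall_adj {G : SimpleGraph α} (P : Finpartition s)
    (hP : ∀ p ∈ P.parts, (p : Set α).Pairwise fun u v ↦ ¬ G.Adj u v) {a : α} (ha : a ∈ s)
    (hadj : ∀ b ∈ s, b ≠ a → G.Adj a b) : P.part a = {a} := by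
  refine eq_singleton_iff_unique_mem.2 ⟨P.mem_part ha, fun b hb ↦ ?_⟩
  by_contra hba
  exact hP _ (P.part_mem.2 ha) (P.mem_part ha) hb (Ne.symm hba) (hadj b (P.part_subset a hb) hba)

end Finpartition

theorem SimpleGraph.ncard_support_le_two_mul_ncard_edgeSet {V : Type*} [Finite V]
    (G : SimpleGraph V) :
    G.support.ncard ≤ 2 * G.edgeSet.ncard := by
  classical
  have := Fintype.ofFinite V
  rw [Set.ncard_eq_toFinset_card', ← coe_edgeFinset, Set.ncard_coe_finset,
    ← sum_degrees_support_eq_twice_card_edges]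
  exact (card_eq_sum_ones _).trans_le <| sum_le_sum fun v hv ↦
    (G.degree_pos_iff_exists_adj v).2 (G.mem_support.1 (Set.mem_toFinset.1 hv))

theorem stmt7_general {V : Type*} [Fintype V] [DecidableEq V] (G H : SimpleGraph V) (k : ℕ)
    (hA : (H.edgeSet \ G.edgeSet).ncard ≤ k)
    (C : Finset V) (hC : H.IsClique (C : Set V)) :
    {P : Finpartition C | ∀ p ∈ P.parts,
      (p : Set V).Pairwise fun u v => ¬ G.Adj u v}.ncard ≤ (2 * k) ^ (2 * k) := by
  classical
  set S := C.filter (· ∈ (H \ G).support)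
  have hS : #S ≤ 2 * k := calc
    #S ≤ (H \ G).support.ncard := by
      rw [← Set.ncard_coe_finset]
      exact Set.ncard_le_ncard fun v hv ↦ (mem_filter.1 hv).2
    _ ≤ 2 * (H \ G).edgeSet.ncard := (H \ G).ncard_support_le_two_mul_ncard_edgeSet
    _ ≤ 2 * k := by rw [SimpleGraph.edgeSet_sdiff]; omega
  have singleton_outside : {P : Finpartition C | ∀ p ∈ P.parts,
      (p : Set V).Pairwise fun u v => ¬ G.Adj u v} ⊆ {P | ∀ a ∈ C, a ∉ S → P.part a = {a}} := by
    intro P hP a ha haS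
    refine P.part_eq_singleton_of_forall_adj hP ha fun b hb hba ↦ ?_
    by_contra hG
    have hHG : (H \ G).Adj a b := (H.sdiff_adj G a b).2 ⟨hC ha hb hba.symm, hG⟩
    exact haS (mem_filter.2 ⟨ha, (H \ G).mem_support.2 ⟨b, hHG⟩⟩)
  calc _ ≤ _ := Set.ncard_le_ncard singleton_outside
    _ ≤ #S ^ #S := Finpartition.ncard_setOf_part_eq_singleton_le (filter_subset _ _)
    _ ≤ (2 * k) ^ (2 * k) := Nat.pow_self_mono hS

/-- Let `H = G + A` be a chordal supergraph of `G` obtained by adding at most `k`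
edges, and let `C` be a clique of `H`. Then the number of partitions of `C` into
sets that are independent in `G` is at most `(2k)^(2k)`. -/
theorem stmt7 {V : Type*} [Fintype V] [DecidableEq V] (G H : SimpleGraph V) (k : ℕ)
    (hle : G ≤ H) (hA : (H.edgeSet \ G.edgeSet).ncard ≤ k) (hch : IsChordal H)
    (C : Finset V) (hC : H.IsClique (C : Set V)) :
    {P : Finpartition C | ∀ p ∈ P.parts,
      (p : Set V).Pairwise fun u v => ¬ G.Adj u v}.ncard ≤ (2 * k) ^ (2 * k) :=
  stmt7_general G H k hA C hC
end

section
/- Let (X, I) be a partition of V(G) with I independent, and suppose every independent subset of X has size at most 2k. If u ∈ X has at least 2k neighbors in I, then for every independent set S of G containing u, |S| ≤ |I|; hence the maximum independent set size of G equals the maximum independent set size of G − u or is attained by I itself, and G has an independent set of size ≥ ℓ iff G − u does. -/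
/-!
An independent set `S` through `u` meets `X` in at most `2k` vertices, and it meets `I` only
outside the `≥ 2k` neighbours of `u` there, so `|S| ≤ 2k + (|I| - 2k) = |I|`. Hence an
independent set through `u` can always be traded for `I`, which avoids `u`.
-/

open Finset

namespace SimpleGraph

variable {V : Type*} {G : SimpleGraph V}

theorem IsIndepSet.card_inter_add_card_filter_adj_le [DecidableEq V] [DecidableRel G.Adj]
    {S I : Finset V} (hS : G.IsIndepSet S) {u : V} (huS : u ∈ S) (huI : u ∉ I) :
    #(S ∩ I) + #(I.filter (G.Adj u)) ≤ #I := by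
  have hdisj : Disjoint (S ∩ I) (I.filter (G.Adj u)) := by
    refine Finset.disjoint_left.mpr fun v hv hadj => ?_
    have hne : u ≠ v := by rintro rfl; exact huI (mem_inter.mp hv).2
    exact hS huS (mem_inter.mp hv).1 hne (mem_filter.mp hadj).2
  rw [← card_union_of_disjoint hdisj]
  exact card_le_card (union_subset inter_subset_right (filter_subset _ _))

theorem exists_isIndepSet_le_card_iff_of_notMem {I : Finset V} (hI : G.IsIndepSet I) {u : V}
    (huI : u ∉ I) (hbound : ∀ S : Finset V, G.IsIndepSet S → u ∈ S → #S ≤ #I) (ℓ : ℕ) :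
    (∃ S : Finset V, G.IsIndepSet S ∧ ℓ ≤ #S) ↔
      ∃ S : Finset V, u ∉ S ∧ G.IsIndepSet S ∧ ℓ ≤ #S := by
  refine ⟨fun ⟨S, hS, hℓ⟩ => ?_, fun ⟨S, _, hS, hℓ⟩ => ⟨S, hS, hℓ⟩⟩
  by_cases huS : u ∈ S
  · exact ⟨I, huI, hI, hℓ.trans (hbound S hS huS)⟩
  · exact ⟨S, huS, hS, hℓ⟩

end SimpleGraph

open SimpleGraph

/-- Let `(X, I)` be a partition of `V(G)` with `I` independent, such that every
independent subset of `X` has size at most `2k`. If `u ∈ X` has at least `2k`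
neighbors in `I`, then every independent set containing `u` has size at most
`|I|`, and `G` has an independent set of size at least `ℓ` iff it has one
avoiding `u` (i.e. iff `G − u` does). -/
theorem stmt17 {V : Type*} [Fintype V] [DecidableEq V] (G : SimpleGraph V)
    [DecidableRel G.Adj] (k ℓ : ℕ) (X I : Finset V)
    (hdisj : Disjoint X I) (hunion : X ∪ I = Finset.univ)
    (hI : (I : Set V).Pairwise fun a b => ¬ G.Adj a b)
    (hX : ∀ S : Finset V, S ⊆ X → ((S : Set V).Pairwise fun a b => ¬ G.Adj a b) →
      S.card ≤ 2 * k)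
    (u : V) (hu : u ∈ X) (hnbrs : 2 * k ≤ (I.filter (fun v => G.Adj u v)).card) :
    (∀ S : Finset V, ((S : Set V).Pairwise fun a b => ¬ G.Adj a b) → u ∈ S →
      S.card ≤ I.card) ∧
    ((∃ S : Finset V, ((S : Set V).Pairwise fun a b => ¬ G.Adj a b) ∧ ℓ ≤ S.card) ↔
      (∃ S : Finset V, u ∉ S ∧ ((S : Set V).Pairwise fun a b => ¬ G.Adj a b) ∧
        ℓ ≤ S.card)) := by
  have huI : u ∉ I := disjoint_left.mp hdisj hu
  have hbound : ∀ S : Finset V, G.IsIndepSet S → u ∈ S → #S ≤ #I := by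
    intro S hS huS
    have hsplit : #S = #(S ∩ X) + #(S ∩ I) := by
      rw [← card_union_of_disjoint (disjoint_of_subset_left inter_subset_right
        (disjoint_of_subset_right inter_subset_right hdisj)), ← inter_union_distrib_left,
        hunion, inter_univ]
    have hSX : #(S ∩ X) ≤ 2 * k :=
      hX _ inter_subset_right (hS.mono (coe_subset.mpr inter_subset_left))
    have hSI : #(S ∩ I) + #(I.filter fun v => G.Adj u v) ≤ #I :=
      hS.card_inter_add_card_filter_adj_le huS huI
    omega
  exact ⟨hbound, exists_isIndepSet_le_card_iff_of_notMem hI huI hbound ℓ⟩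
end

section
/- Let G be a graph, S an independent set of G, X ⊆ V(G), and set S₀ = S ∩ X. Let C₁,...,C_s be the connected components of G − (X ∪ N(S₀)). Then S \ S₀ ⊆ V(C₁) ∪ ... ∪ V(C_s), and for arbitrary maximum independent sets Iᵢ of Cᵢ, the set S₀ ∪ I₁ ∪ ... ∪ I_s is an independent set of G of size at least |S|. -/
/-! A vertex of `S ∖ S₀` lies outside `X` and, `S` being independent, has no neighbour in `S₀`;
so `S ∖ S₀` lives in `G[W]`. There it meets each component in an independent set, which is no
larger than the chosen maximum one, and summing over the components bounds `|S ∖ S₀|` by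
`|⋃ c, I' c|`. The union with `S₀` is independent because `W` avoids `N(S₀)` and the `I' c` lie
in distinct components. -/

open Set

namespace SimpleGraph

variable {V : Type*} {G : SimpleGraph V}

lemma isIndepSet_iUnion_of_subset_supp {I : G.ConnectedComponent → Set V}
    (hsupp : ∀ c, I c ⊆ c.supp) (hI : ∀ c, G.IsIndepSet (I c)) :
    G.IsIndepSet (⋃ c, I c) := by
  rintro u hu v hv hne hadj
  obtain ⟨c, huc⟩ := mem_iUnion.mp hu
  obtain ⟨d, hvd⟩ := mem_iUnion.mp hv
  have hcd : c = d := by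
    rw [← (hsupp c huc : G.connectedComponentMk u = c),
      ← (hsupp d hvd : G.connectedComponentMk v = d)]
    exact ConnectedComponent.connectedComponentMk_eq_of_adj hadj
  subst hcd
  exact hI c huc hvd hne hadj

lemma ncard_eq_finsum_ncard_inter_supp [Finite V] (T : Set V) :
    T.ncard = ∑ᶠ c : G.ConnectedComponent, (T ∩ c.supp).ncard := by
  conv_lhs => rw [← inter_univ T, ← G.iUnion_connectedComponentSupp, inter_iUnion]
  exact ncard_iUnion_of_finite (fun _ => toFinite _) fun c d hcd =>
    (G.pairwise_disjoint_supp_connectedComponent hcd).mono inter_subset_right inter_subset_right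

lemma ncard_le_ncard_iUnion_of_subset_supp [Finite V] {T : Set V}
    {I : G.ConnectedComponent → Set V} (hsupp : ∀ c, I c ⊆ c.supp)
    (hle : ∀ c, (T ∩ c.supp).ncard ≤ (I c).ncard) :
    T.ncard ≤ (⋃ c, I c).ncard := by
  rw [G.ncard_eq_finsum_ncard_inter_supp T, ncard_iUnion_of_finite (fun _ => toFinite _)
    fun c d hcd => (G.pairwise_disjoint_supp_connectedComponent hcd).mono (hsupp c) (hsupp d)]
  exact finsum_le_finsum' (toFinite _) (toFinite _) hle

lemma isIndepSet_union_image_val {A W : Set V} {U : Set W} (hA : G.IsIndepSet A)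
    (hU : (G.induce W).IsIndepSet U) (hW : ∀ w ∈ W, ∀ a ∈ A, ¬ G.Adj a w) :
    G.IsIndepSet (A ∪ Subtype.val '' U) := by
  refine pairwise_union.mpr ⟨hA, Subtype.val_injective.injOn.pairwise_image.mpr hU, ?_⟩
  rintro a ha _ ⟨w, -, rfl⟩ -
  exact ⟨hW w w.2 a ha, fun h => hW w w.2 a ha h.symm⟩

end SimpleGraph

open SimpleGraph

/-- Let `S` be an independent set of `G`, `X ⊆ V(G)`, `S₀ = S ∩ X`, and let `W` be
the vertex set obtained by deleting `X` and the neighborhood of `S₀`. Then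
`S \ S₀ ⊆ W`, and for any choice of maximum independent sets `I' c` of the
connected components `c` of the induced subgraph `G[W]`, the set
`S₀ ∪ ⋃ c, I' c` is an independent set of `G` of size at least `|S|`. -/
theorem stmt18 {V : Type*} [Fintype V] (G : SimpleGraph V) (S X : Set V)
    (hS : S.Pairwise fun a b => ¬ G.Adj a b) :
    let S₀ : Set V := S ∩ X
    let W : Set V := {v | v ∉ X ∧ ∀ s ∈ S₀, ¬ G.Adj s v}
    let G' : SimpleGraph W := G.induce W
    (S \ S₀ ⊆ W) ∧
    ∀ I' : G'.ConnectedComponent → Set W,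
      (∀ c, I' c ⊆ c.supp) →
      (∀ c, (I' c).Pairwise fun a b => ¬ G'.Adj a b) →
      (∀ c, ∀ T : Set W, T ⊆ c.supp → (T.Pairwise fun a b => ¬ G'.Adj a b) →
        T.ncard ≤ (I' c).ncard) →
      ((S₀ ∪ (Subtype.val '' ⋃ c, I' c)).Pairwise fun a b => ¬ G.Adj a b) ∧
        S.ncard ≤ (S₀ ∪ (Subtype.val '' ⋃ c, I' c)).ncard := by
  intro S₀ W G'
  have hsub : S \ S₀ ⊆ W := fun v hv =>
    ⟨fun hvX => hv.2 ⟨hv.1, hvX⟩,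
      fun s hs hadj => hS hs.1 hv.1 (by rintro rfl; exact hv.2 hs) hadj⟩
  refine ⟨hsub, fun I' hsupp hindep hmax => ⟨?_, ?_⟩⟩
  · exact isIndepSet_union_image_val (hS.mono inter_subset_left)
      (isIndepSet_iUnion_of_subset_supp hsupp hindep) fun w hw => hw.2
  · set T : Set W := Subtype.val ⁻¹' S
    have hT : G'.IsIndepSet T := fun a ha b hb hne => hS ha hb (Subtype.val_injective.ne hne)
    have hTimage : Subtype.val '' T = S \ S₀ := by
      rw [image_preimage_eq_inter_range, Subtype.range_coe]
      exact Subset.antisymm (fun v ⟨hvS, hvW⟩ => ⟨hvS, fun hv => hvW.1 hv.2⟩)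
        fun v hv => ⟨hv.1, hsub hv⟩
    have hdisj : Disjoint S₀ (Subtype.val '' ⋃ c, I' c) := by
      rw [Set.disjoint_left]
      rintro s hs ⟨w, -, rfl⟩
      exact w.2.1 hs.2
    calc S.ncard = (S \ S₀).ncard + S₀.ncard :=
          (ncard_sdiff_add_ncard_of_subset inter_subset_left).symm
      _ = T.ncard + S₀.ncard := by
        rw [← hTimage, ncard_image_of_injective _ Subtype.val_injective]
      _ ≤ (⋃ c, I' c).ncard + S₀.ncard :=
        Nat.add_le_add_right (ncard_le_ncard_iUnion_of_subset_supp hsupp fun c =>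
          hmax c _ inter_subset_right (hT.mono inter_subset_left)) _
      _ = (S₀ ∪ (Subtype.val '' ⋃ c, I' c)).ncard := by
        rw [ncard_union_eq hdisj, ncard_image_of_injective _ Subtype.val_injective, add_comm]
end
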